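/- arXiv:2005.09884 — 4 statements merged into one kernel-verified Lean document; each statement's English description precedes it below -/
import Mathlib

section
/- Let n > a > 0 be coprime integers and let R = ℂ[X,Y,Z,T]/(XY − Z^n − T^a) be graded with deg(X,Y,Z,T) = (1, na−1, a, n). Let p, q ∈ ℤ satisfy pa + qn = 1. Then the degree-0 localization R(na−1)_{(ZT)} := { f/(ZT)^d : f homogeneous, deg f − d(a+n) = na−1 } is a free module of rank one over R_{(ZT)}, generated by (Z^p T^q)^{na−1}. -/
noncomputable section
open MvPolynomial

/-- `R = ℂ[X,Y,Z,T]/(XY − Zⁿ − Tᵃ)`, the weighted homogeneous coordinate ring of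
`W = (XY = Zⁿ + Tᵃ) ⊂ ℙ(1, na−1, a, n)`.  Variables: `X 0 = X`, `X 1 = Y`,
`X 2 = Z`, `X 3 = T`. -/
abbrev Wring (n a : ℕ) : Type :=
  MvPolynomial (Fin 4) ℂ ⧸
    Ideal.span {(X 0 * X 1 - X 2 ^ n - X 3 ^ a : MvPolynomial (Fin 4) ℂ)}

/-- The quotient map `ℂ[X,Y,Z,T] → R`. -/
def wpr (n a : ℕ) : MvPolynomial (Fin 4) ℂ →+* Wring n a := Ideal.Quotient.mk _

/-- The grading weights `deg (X,Y,Z,T) = (1, na−1, a, n)`. -/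
def wwt (n a : ℕ) : Fin 4 → ℕ := ![1, n * a - 1, a, n]

/-- The degree-`k` piece `R(k)_{(den)}` of the localization of `R` at (the class of) a
weighted homogeneous polynomial `den` of weighted degree `dendeg`: the set of elements
`y = f/denᵈ` (i.e. `y · denᵈ = f` in the localization) with `f` weighted homogeneous of
degree `m` satisfying `m − d·dendeg = k`. -/
def gradedPiece (n a : ℕ) (den : MvPolynomial (Fin 4) ℂ) (dendeg : ℕ) (k : ℤ) :
    Set (Localization.Away (wpr n a den)) :=
  {y | ∃ (f : MvPolynomial (Fin 4) ℂ) (d m : ℕ),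
    IsWeightedHomogeneous (wwt n a) f m ∧ (m : ℤ) = k + d * dendeg ∧
    y * (algebraMap (Wring n a) (Localization.Away (wpr n a den)) (wpr n a den)) ^ d
      = algebraMap (Wring n a) (Localization.Away (wpr n a den)) (wpr n a f)}

lemma wh_pow {σ R M : Type*} [CommSemiring R] [AddCommMonoid M] {w : σ → M}
    {φ : MvPolynomial σ R} {m : M} (h : IsWeightedHomogeneous w φ m) (k : ℕ) :
    IsWeightedHomogeneous w (φ ^ k) (k • m) := by
  induction k with
  | zero => simpa using isWeightedHomogeneous_one R w
  | succ i ih => rw [pow_succ, succ_nsmul]; exact ih.mul h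

lemma stmt8_aux {S : Type*} [CommRing S] (ψ : MvPolynomial (Fin 4) ℂ →+* S)
    (hu : IsUnit (ψ (X 2 * X 3))) (e1 e2 d : ℕ)
    (g : S) (hg : g * ψ (X 2 * X 3) ^ d = ψ (X 2 ^ e1 * X 3 ^ e2))
    (y : S) (f : MvPolynomial (Fin 4) ℂ) (d' : ℕ)
    (hyd : y * ψ (X 2 * X 3) ^ d' = ψ f) :
    ∃ r : S,
      (r * ψ (X 2 * X 3) ^ (e1 + e2 + d')
          = ψ (f * (X 2 * X 3) ^ d * (X 2 ^ e2 * X 3 ^ e1)) ∧ y = r * g)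
      ∧ ∀ r' : S, y = r' * g → r' = r := by
  obtain ⟨c, hc⟩ : ∃ c, c * ψ (X 2 * X 3) = 1 :=
    ⟨↑hu.unit⁻¹, by nth_rewrite 2 [← hu.unit_spec]; exact Units.inv_mul _⟩
  have hcE : c ^ (e1 + e2) * ψ (X 2 * X 3) ^ (e1 + e2) = 1 := by
    rw [← mul_pow, hc, one_pow]
  have hAB : ψ (X 2 ^ e2 * X 3 ^ e1) * ψ (X 2 ^ e1 * X 3 ^ e2)
      = ψ (X 2 * X 3) ^ (e1 + e2) := by
    rw [← map_mul, ← map_pow]; congr 1; ring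
  have hy2 : y = (y * c ^ (e1 + e2) * ψ (X 2 * X 3) ^ d * ψ (X 2 ^ e2 * X 3 ^ e1)) * g := by
    linear_combination (-(y * c ^ (e1 + e2) * ψ (X 2 ^ e2 * X 3 ^ e1))) * hg
      - (y * c ^ (e1 + e2)) * hAB - y * hcE
  refine ⟨y * c ^ (e1 + e2) * ψ (X 2 * X 3) ^ d * ψ (X 2 ^ e2 * X 3 ^ e1), ⟨?_, hy2⟩, ?_⟩
  · have hRHS : ψ f * ψ (X 2 * X 3) ^ d * ψ (X 2 ^ e2 * X 3 ^ e1)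
        = ψ (f * (X 2 * X 3) ^ d * (X 2 ^ e2 * X 3 ^ e1)) := by
      simp only [map_mul, map_pow]
    linear_combination (c ^ (e1 + e2) * ψ (X 2 * X 3) ^ (e1 + e2 + d)
        * ψ (X 2 ^ e2 * X 3 ^ e1)) * hyd
      + (ψ f * ψ (X 2 * X 3) ^ d * ψ (X 2 ^ e2 * X 3 ^ e1)) * hcE + hRHS
  · intro r' hr'
    have hone : g * (ψ (X 2 * X 3) ^ d * ψ (X 2 ^ e2 * X 3 ^ e1) * c ^ (e1 + e2)) = 1 := by
      linear_combination (ψ (X 2 ^ e2 * X 3 ^ e1) * c ^ (e1 + e2)) * hg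
        + c ^ (e1 + e2) * hAB + hcE
    linear_combination (ψ (X 2 * X 3) ^ d * ψ (X 2 ^ e2 * X 3 ^ e1) * c ^ (e1 + e2)) * hy2
      - (ψ (X 2 * X 3) ^ d * ψ (X 2 ^ e2 * X 3 ^ e1) * c ^ (e1 + e2)) * hr'
      + (y * c ^ (e1 + e2) * ψ (X 2 * X 3) ^ d * ψ (X 2 ^ e2 * X 3 ^ e1) - r') * hone

/-- On the chart `ZT ≠ 0`, with `pa + qn = 1`, the degree-0 localization
`R(na−1)_{(ZT)}` is a free module of rank one over `R_{(ZT)} = R(0)_{(ZT)}`, generated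
by `(Zᵖ Tᑫ)^{na−1}`.  The generator `g` is described as the fraction
`Z^{p(na−1)+d} T^{q(na−1)+d} / (ZT)^d` (clearing the possibly negative integer
exponents `p(na−1)`, `q(na−1)`), and freeness of rank one means: every element of
`R(na−1)_{(ZT)}` is `r·g` for a unique `r ∈ R(0)_{(ZT)}`. -/
theorem stmt8 (n a : ℕ) (ha : 0 < a) (hna : a < n) (hcop : Nat.Coprime n a)
    (p q : ℤ) (hpq : p * a + q * n = 1)
    (d e1 e2 : ℕ)
    (he1 : (e1 : ℤ) = p * ((n : ℤ) * a - 1) + d)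
    (he2 : (e2 : ℤ) = q * ((n : ℤ) * a - 1) + d)
    (g : Localization.Away (wpr n a (X 2 * X 3)))
    (hg : g * (algebraMap (Wring n a) (Localization.Away (wpr n a (X 2 * X 3)))
            (wpr n a (X 2 * X 3))) ^ d
        = algebraMap (Wring n a) (Localization.Away (wpr n a (X 2 * X 3)))
            (wpr n a (X 2 ^ e1 * X 3 ^ e2))) :
    ∀ y ∈ gradedPiece n a (X 2 * X 3) (a + n) ((n : ℤ) * a - 1),
      ∃! r : Localization.Away (wpr n a (X 2 * X 3)),
        r ∈ gradedPiece n a (X 2 * X 3) (a + n) 0 ∧ y = r * g := by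
  intro y hy
  obtain ⟨f, d', m, hfhom, hm, hyd⟩ := hy
  have hu : IsUnit (algebraMap (Wring n a) (Localization.Away (wpr n a (X 2 * X 3)))
      (wpr n a (X 2 * X 3))) :=
    IsLocalization.Away.algebraMap_isUnit (S := Localization.Away (wpr n a (X 2 * X 3))) (wpr n a (X 2 * X 3))
  obtain ⟨r, ⟨hreq, hyr⟩, huniq⟩ :=
    stmt8_aux ((algebraMap (Wring n a) (Localization.Away (wpr n a (X 2 * X 3)))).comp
      (wpr n a)) hu e1 e2 d g hg y f d' hyd
  refine ⟨r, ⟨?_, hyr⟩, fun r' h => huniq r' h.2⟩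
  refine ⟨f * (X 2 * X 3) ^ d * (X 2 ^ e2 * X 3 ^ e1), e1 + e2 + d',
    m + d • (a + n) + (e2 • a + e1 • n), ?_, ?_, hreq⟩
  · have hZ : IsWeightedHomogeneous (wwt n a) (X 2 : MvPolynomial (Fin 4) ℂ) a :=
      isWeightedHomogeneous_X ℂ _ 2
    have hT : IsWeightedHomogeneous (wwt n a) (X 3 : MvPolynomial (Fin 4) ℂ) n :=
      isWeightedHomogeneous_X ℂ _ 3
    exact (hfhom.mul (wh_pow (hZ.mul hT) d)).mul ((wh_pow hZ e2).mul (wh_pow hT e1))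
  · push_cast [smul_eq_mul] at hm ⊢
    linear_combination hm - (a : ℤ) * he1 - (n : ℤ) * he2 - ((n : ℤ) * a - 1) * hpq
end
end

section
/- Let n > a > 0 be coprime integers and R = ℂ[X,Y,Z,T]/(XY − Z^n − T^a) graded with deg(X,Y,Z,T) = (1, na−1, a, n). Then the degree-0 localization R(na−1)_{(Y)} := { f/Y^d : deg f − d(na−1) = na−1 } is a free R_{(Y)}-module of rank one generated by Y (i.e., by Y/Y^0, the element of degree na−1). -/
noncomputable section
open MvPolynomial

/-- On the chart `Y ≠ 0` (where `Y` has weighted degree `na−1`), the degree-0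
localization `R(na−1)_{(Y)}` is a free module of rank one over `R_{(Y)} = R(0)_{(Y)}`,
generated by `Y` (i.e. by `Y/Y⁰`, the element of degree `na−1`): every element of
`R(na−1)_{(Y)}` is `r · Y` for a unique `r ∈ R(0)_{(Y)}`. -/
theorem stmt9 (n a : ℕ) (ha : 0 < a) (hna : a < n) (hcop : Nat.Coprime n a) :
    ∀ y ∈ gradedPiece n a (X 1) (n * a - 1) ((n : ℤ) * a - 1),
      ∃! r : Localization.Away (wpr n a (X 1)),
        r ∈ gradedPiece n a (X 1) (n * a - 1) 0 ∧
        y = r * algebraMap (Wring n a) (Localization.Away (wpr n a (X 1)))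
              (wpr n a (X 1)) := by
  intro y hy
  obtain ⟨f, d, m, hf, hm, hyeq⟩ := hy
  have hu : IsUnit (algebraMap (Wring n a) (Localization.Away (wpr n a (X 1)))
      (wpr n a (X 1))) := IsLocalization.Away.algebraMap_isUnit (S := Localization.Away (wpr n a (X 1))) (wpr n a (X 1))
  obtain ⟨u, hu'⟩ := hu
  have hcast : ((n * a - 1 : ℕ) : ℤ) = (n : ℤ) * a - 1 := by
    have h1 : 1 ≤ n * a := Nat.one_le_iff_ne_zero.mpr (Nat.mul_ne_zero (by omega) ha.ne')
    push_cast [Nat.cast_sub h1]; ring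
  rw [← hu'] at hyeq ⊢
  refine ⟨y * ↑u⁻¹, ⟨⟨f, d + 1, m, hf, ?_, ?_⟩, ?_⟩, ?_⟩
  · rw [hcast] at hm ⊢
    push_cast
    linarith [hm]
  · rw [← hu', ← hyeq, pow_succ,
      show y * ↑u⁻¹ * ((u : Localization.Away (wpr n a (X 1))) ^ d * ↑u)
        = y * ↑u ^ d * (↑u⁻¹ * ↑u) by ring, Units.inv_mul, mul_one]
  · rw [mul_assoc, Units.inv_mul, mul_one]
  · rintro r' ⟨-, hr'⟩
    rw [hr', mul_assoc, Units.mul_inv, mul_one]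
end
end

section
/- Let N = ℤ² and let σ be the cone spanned by (0,1) and (dn², 1 − dna), where d, n, a are positive integers with gcd(n,a) = 1 and n > a. Subdivide σ by the rays ρ_k = ℝ_{≥0}·(kn², 1 − kna) for k = 1, ..., d−1. Then for each k = 1, ..., d, the cone spanned by ((k−1)n², 1 − (k−1)na) and (kn², 1 − kna) is, after a change of basis in GL_2(ℤ), the cone spanned by (0,1) and (n², 1 − na); i.e., each subdivided cone corresponds to the cyclic quotient singularity 1/n²(1, na−1). -/
/-- Toric description of the M-resolution of `1/(dn²)(1, dna−1)`: subdividing the cone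
spanned by `(0,1)` and `(dn², 1−dna)` by the rays through `(kn², 1−kna)`, each
subcone, spanned by `((k−1)n², 1−(k−1)na)` and `(kn², 1−kna)` for `1 ≤ k ≤ d`, is
mapped by a change of basis `M ∈ GL₂(ℤ)` onto the cone spanned by `(0,1)` and
`(n², 1−na)`; i.e. each subdivided cone is the cyclic quotient singularity
`1/n²(1, na−1)`. -/
theorem stmt12 (d n a : ℕ) (hd : 0 < d) (hn : 0 < n) (ha : 0 < a) (hna : a < n)
    (hcop : Nat.Coprime n a) (k : ℕ) (hk1 : 1 ≤ k) (hkd : k ≤ d) :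
    ∃ M : Matrix (Fin 2) (Fin 2) ℤ, IsUnit M.det ∧
      M.mulVec ![((k : ℤ) - 1) * (n : ℤ) ^ 2, 1 - ((k : ℤ) - 1) * n * a] = ![0, 1] ∧
      M.mulVec ![(k : ℤ) * (n : ℤ) ^ 2, 1 - (k : ℤ) * n * a]
        = ![(n : ℤ) ^ 2, 1 - (n : ℤ) * a] := by
  refine ⟨!![1 - ((k:ℤ)-1)*n*a, -((k:ℤ)-1)*(n:ℤ)^2; ((k:ℤ)-1)*(a:ℤ)^2, 1 + ((k:ℤ)-1)*n*a],
    ?_, ?_, ?_⟩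
  · rw [Matrix.det_fin_two_of]
    convert isUnit_one using 1
    ring
  all_goals
    funext i
    fin_cases i <;>
      simp [Matrix.mulVec, dotProduct, Fin.sum_univ_two] <;> ring
end

section
/- Let n ≥ 2 and a be coprime positive integers with n > a, and consider the fan in ℤ² with rays ρ_k = ℝ_{≥0}·(kn², 1 − kna) for k = 0, 1, ..., d (where ρ_0 = ℝ_{≥0}·(0,1)). On the associated toric surface, the torus-invariant curves A_k (k = 1, ..., d−1) corresponding to the interior rays ρ_k satisfy the intersection numbers (A_k)² = −2/n², (A_k · A_{k+1}) = 1/n² for 1 ≤ k ≤ d−2, and (A_i · A_j) = 0 for |i − j| ≥ 2. -/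
/-- The determinant `det(v_i, v_j)` of two lattice vectors in `ℤ²`. -/
def dt (v : ℕ → Fin 2 → ℤ) (i j : ℕ) : ℤ := v i 0 * v j 1 - v i 1 * v j 0

/-- Intersection numbers of the torus-invariant curves `A_i` (corresponding to the rays
`ρ_i = ℝ_{≥0}·v_i`) on the simplicial toric surface whose maximal cones are
`Conv(ρ_{k}, ρ_{k+1})`, computed by the standard toric formulas:
`A_i·A_j = 1/mult(σ)` if `ρ_i, ρ_j` span the cone `σ` (`mult = |det(v_i,v_j)|`),
`A_i² = −|det(v_{i−1}, v_{i+1})| / (|det(v_{i−1}, v_i)|·|det(v_i, v_{i+1})|)`,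
and `A_i·A_j = 0` when the rays span no common cone (`|i−j| ≥ 2`). -/
noncomputable def toricInt (v : ℕ → Fin 2 → ℤ) (i j : ℕ) : ℚ :=
  if i = j then
    -(((dt v (i - 1) (i + 1)).natAbs : ℚ)) /
      (((dt v (i - 1) i).natAbs : ℚ) * ((dt v i (i + 1)).natAbs : ℚ))
  else if i + 1 = j ∨ j + 1 = i then 1 / (((dt v (min i j) (max i j)).natAbs : ℚ))
  else 0

lemma dt_eq (n a : ℕ) (v : ℕ → Fin 2 → ℤ)
    (hv : ∀ k, v k = ![(k : ℤ) * (n : ℤ) ^ 2, 1 - (k : ℤ) * n * a]) (i j : ℕ) :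
    dt v i j = ((i : ℤ) - (j : ℤ)) * (n : ℤ) ^ 2 := by
  simp only [dt, hv]
  simp [Matrix.cons_val_zero, Matrix.cons_val_one]
  ring

/-- On the toric surface `Z₀` given by the fan with rays `ρ_k = ℝ_{≥0}·(kn², 1−kna)`,
`k = 0, …, d`, the interior invariant curves `A_k` (`k = 1, …, d−1`) satisfy
`(A_k)² = −2/n²`, `A_k·A_{k+1} = 1/n²`, and `A_i·A_j = 0` for `|i−j| ≥ 2`. -/
theorem stmt13 (d n a : ℕ) (hn : 2 ≤ n) (ha : 0 < a) (hna : a < n)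
    (hcop : Nat.Coprime n a)
    (v : ℕ → Fin 2 → ℤ) (hv : ∀ k, v k = ![(k : ℤ) * (n : ℤ) ^ 2, 1 - (k : ℤ) * n * a]) :
    (∀ k, 1 ≤ k → k ≤ d - 1 → toricInt v k k = -2 / (n : ℚ) ^ 2) ∧
    (∀ k, 1 ≤ k → k ≤ d - 2 → toricInt v k (k + 1) = 1 / (n : ℚ) ^ 2) ∧
    (∀ i j, 1 ≤ i → i ≤ d - 1 → 1 ≤ j → j ≤ d - 1 → i + 2 ≤ j ∨ j + 2 ≤ i →
      toricInt v i j = 0) := by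
  have hn0 : (0 : ℤ) < (n : ℤ) ^ 2 := by positivity
  have key : ∀ i j : ℕ, (dt v i j).natAbs = ((i : ℤ) - (j : ℤ)).natAbs * n ^ 2 := by
    intro i j
    rw [dt_eq n a v hv, Int.natAbs_mul]
    congr 1
  refine ⟨?_, ?_, ?_⟩
  · intro k hk1 hk2
    have hksub : ((k - 1 : ℕ) : ℤ) = (k : ℤ) - 1 := by
      push_cast [Nat.cast_sub hk1]; ring
    simp only [toricInt, if_pos rfl, key, hksub]
    have h1 : ((k : ℤ) - 1 - (k + 1 : ℕ)).natAbs = 2 := by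
      push_cast
      have : (k : ℤ) - 1 - ((k : ℤ) + 1) = -2 := by ring
      rw [this]; rfl
    have h2 : ((k : ℤ) - 1 - (k : ℤ)).natAbs = 1 := by
      have : (k : ℤ) - 1 - (k : ℤ) = -1 := by ring
      rw [this]; rfl
    have h3 : ((k : ℤ) - (k + 1 : ℕ)).natAbs = 1 := by
      push_cast
      have : (k : ℤ) - ((k : ℤ) + 1) = -1 := by ring
      rw [this]; rfl
    rw [h1, h2, h3]
    have hnq : ((n : ℚ) ^ 2) ≠ 0 := by positivity
    push_cast
    field_simp
  · intro k _ _
    have hne : k ≠ k + 1 := by omega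
    simp only [toricInt, if_neg hne, if_pos (Or.inl rfl), min_self, key,
      min_eq_left (Nat.le_succ k), max_eq_right (Nat.le_succ k)]
    have h3 : ((k : ℤ) - (k + 1 : ℕ)).natAbs = 1 := by
      push_cast
      have : (k : ℤ) - ((k : ℤ) + 1) = -1 := by ring
      rw [this]; rfl
    rw [h3]
    push_cast
    simp
  · intro i j _ _ _ _ hij
    have h1 : i ≠ j := by omega
    have h2 : ¬(i + 1 = j ∨ j + 1 = i) := by omega
    simp [toricInt, h1, h2]
end
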